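/- arXiv:1902.01461 — 8 statements merged into one kernel-verified Lean document; each statement's English description precedes it below -/
import Mathlib

section
/- Let T be a finite type. For every decision tree 𝒯 over T and every set function f : Finset T → ℝ that is monotone and submodular with f(∅) = 0, the adaptive value is at most twice the non-adaptive value: adap(𝒯, f) ≤ 2 · alg(𝒯, f). (Upper bound of Theorem 3.1: the adaptivity gap for stochastic multi-value probing with monotone submodular objectives is at most 2.) -/
open Finset

/-- A decision tree over a finite type `T`: either a leaf, or a node with a
probability mass function `μ : T → ℝ` and a child tree for each type `t : T`. -/
inductive DTree (T : Type*) where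
  | leaf : DTree T
  | node : (T → ℝ) → (T → DTree T) → DTree T

/-- All distributions appearing in the tree are probability mass functions. -/
def DTree.valid {T : Type*} [Fintype T] : DTree T → Prop
  | .leaf => True
  | .node μ c => (∀ t, 0 ≤ μ t) ∧ (∑ t, μ t) = 1 ∧ ∀ t, (c t).valid

/-- Contraction `f_S(A) = f(S ∪ A) − f(S)`. -/
def contract {T : Type*} [DecidableEq T] (f : Finset T → ℝ) (S : Finset T) :
    Finset T → ℝ :=
  fun A => f (S ∪ A) - f S

/-- Adaptive value: `adap(leaf, f) = 0`,
`adap(node μ c, f) = E_{I∼μ}[ f({I}) + adap(c(I), f_{{I}}) ]`. -/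
noncomputable def adap {T : Type*} [Fintype T] [DecidableEq T] :
    DTree T → (Finset T → ℝ) → ℝ
  | .leaf, _ => 0
  | .node μ c, f => ∑ t, μ t * (f {t} + adap (c t) (contract f {t}))

/-- Random-walk non-adaptive value: `alg(leaf, f) = 0`,
`alg(node μ c, f) = E_{I∼μ} E_{R∼μ}[ f({R}) + alg(c(I), f_{{R}}) ]`. -/
noncomputable def alg {T : Type*} [Fintype T] [DecidableEq T] :
    DTree T → (Finset T → ℝ) → ℝ
  | .leaf, _ => 0
  | .node μ c, f => ∑ i, ∑ r, μ i * μ r * (f {r} + alg (c i) (contract f {r}))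

/-!
Strengthen the claim to contractions: for `Y ⊆ X`, `adap 𝒯 f_X ≤ alg 𝒯 f_X + alg 𝒯 f_Y`, by
induction on `𝒯`; `X = Y = ∅` gives the theorem. At the root, couple the adaptive probe `I`
with an independent `R ∼ μ`. Adding `R` to the adaptive policy's set costs it at most
`f_{X ∪ I}({R})`, and `f_X({I}) + f_{X ∪ I}({R}) = f_X({R}) + f_{X ∪ R}({I})`. The first term is
the random walk's gain at the root; the second is at most `f_Y({I})`, which has the law of the
gain `f_Y({R})` of a second walk started from `f_Y`. In the subtree `c I` the induction
hypothesis applies to `X ∪ I ∪ R ⊇ Y ∪ R`, and by submodularity the walk's value only drops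
when its set grows from `X ∪ R` to `X ∪ I ∪ R`.
-/

section SetFunction

variable {T : Type*} [DecidableEq T] {f : Finset T → ℝ}

def Submodular (f : Finset T → ℝ) : Prop :=
  ∀ A B : Finset T, f (A ∪ B) + f (A ∩ B) ≤ f A + f B

theorem contract_apply (f : Finset T → ℝ) (S A : Finset T) :
    contract f S A = f (S ∪ A) - f S :=
  rfl

theorem contract_contract (f : Finset T → ℝ) (S A : Finset T) :
    contract (contract f S) A = contract f (S ∪ A) := by
  funext B
  simp only [contract_apply, union_assoc]
  ring

theorem Submodular.antitone_contract (hsub : Submodular f) (hmono : Monotone f)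
    (C : Finset T) : Antitone fun S => contract f S C := by
  intro A B hAB
  have hunion : A ∪ C ∪ B = B ∪ C := by
    rw [union_right_comm, union_eq_right.mpr hAB]
  have hinter : f A ≤ f ((A ∪ C) ∩ B) :=
    hmono (subset_inter subset_union_left hAB)
  have := hsub (A ∪ C) B
  rw [hunion] at this
  simp only [contract_apply]
  linarith

end SetFunction

section Expectation

variable {T : Type*} [Fintype T] {μ : T → ℝ}

theorem sum_sum_mul_mul_left (hμ : ∑ t, μ t = 1) (x : T → ℝ) :
    ∑ i, ∑ r, μ i * μ r * x i = ∑ i, μ i * x i := by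
  refine sum_congr rfl fun i _ => ?_
  rw [← sum_mul, ← mul_sum, hμ, mul_one]

theorem sum_sum_mul_mul_right (hμ : ∑ t, μ t = 1) (x : T → ℝ) :
    ∑ i, ∑ r, μ i * μ r * x r = ∑ r, μ r * x r := by
  rw [sum_comm]
  refine sum_congr rfl fun r _ => ?_
  rw [← sum_mul, ← sum_mul, hμ, one_mul]

end Expectation

section Contraction

variable {T : Type*} [Fintype T] [DecidableEq T] {f : Finset T → ℝ}

theorem adap_contract_le_of_subset (hmono : Monotone f) :
    ∀ 𝒯 : DTree T, 𝒯.valid → ∀ {S S' : Finset T}, S ⊆ S' →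
      adap 𝒯 (contract f S) ≤ adap 𝒯 (contract f S') + (f S' - f S)
  | .leaf, _, S, S', hSS => by
    simp only [adap, zero_add, sub_nonneg]
    exact hmono hSS
  | .node μ c, ⟨hμ_nonneg, hμ_sum, hc⟩, S, S', hSS => by
    have hchild (t : T) :
        contract f S {t} + adap (c t) (contract f (S ∪ {t})) ≤
          contract f S' {t} + adap (c t) (contract f (S' ∪ {t})) + (f S' - f S) := by
      have := adap_contract_le_of_subset hmono (c t) (hc t)
        (union_subset_union_left hSS : S ∪ {t} ⊆ S' ∪ {t})
      simp only [contract_apply]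
      linarith
    calc adap (.node μ c) (contract f S)
        ≤ ∑ t, μ t * (contract f S' {t} + adap (c t) (contract f (S' ∪ {t})) + (f S' - f S)) := by
          simp only [adap, contract_contract]
          exact sum_le_sum fun t _ => mul_le_mul_of_nonneg_left (hchild t) (hμ_nonneg t)
      _ = adap (.node μ c) (contract f S') + (f S' - f S) := by
          simp only [adap, contract_contract, mul_add, sum_add_distrib, ← sum_mul, hμ_sum, one_mul]

theorem alg_contract_antitone (hsub : Submodular f) (hmono : Monotone f) :
    ∀ 𝒯 : DTree T, 𝒯.valid → Antitone fun S => alg 𝒯 (contract f S)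
  | .leaf, _ => fun _ _ _ => le_rfl
  | .node μ c, ⟨hμ_nonneg, _, hc⟩ => by
    intro S S' hSS
    simp only [alg, contract_contract]
    refine sum_le_sum fun i _ => sum_le_sum fun r _ => ?_
    refine mul_le_mul_of_nonneg_left ?_ (mul_nonneg (hμ_nonneg i) (hμ_nonneg r))
    exact add_le_add (hsub.antitone_contract hmono {r} hSS)
      (alg_contract_antitone hsub hmono (c i) (hc i) (union_subset_union_left hSS))

theorem adap_contract_le_alg_add_alg (hsub : Submodular f) (hmono : Monotone f) :
    ∀ 𝒯 : DTree T, 𝒯.valid → ∀ {X Y : Finset T}, Y ⊆ X →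
      adap 𝒯 (contract f X) ≤ alg 𝒯 (contract f X) + alg 𝒯 (contract f Y)
  | .leaf, _, _, _, _ => by simp only [adap, alg, add_zero, le_refl]
  | .node μ c, ⟨hμ_nonneg, hμ_sum, hc⟩, X, Y, hYX => by
    have hcoupled (i r : T) :
        contract f X {i} + adap (c i) (contract f (X ∪ {i})) ≤
          (contract f X {r} + alg (c i) (contract f (X ∪ {r}))) +
            (contract f Y {i} + alg (c i) (contract f (Y ∪ {r}))) := by
      have hXr : X ∪ {r} ⊆ X ∪ {i} ∪ {r} := union_subset_union_left subset_union_left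
      have hprobe := adap_contract_le_of_subset hmono (c i) (hc i)
        (subset_union_left : X ∪ {i} ⊆ X ∪ {i} ∪ {r})
      have hih := adap_contract_le_alg_add_alg hsub hmono (c i) (hc i)
        (union_subset_union_left (hYX.trans subset_union_left) : Y ∪ {r} ⊆ X ∪ {i} ∪ {r})
      have hwalk := alg_contract_antitone hsub hmono (c i) (hc i) hXr
      have hmarginal := hsub.antitone_contract hmono {i}
        (hYX.trans subset_union_left : Y ⊆ X ∪ {r})
      simp only [contract_apply, union_right_comm X {r} {i}] at hmarginal ⊢
      linarith
    calc adap (.node μ c) (contract f X)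
        = ∑ i, ∑ r, μ i * μ r * (contract f X {i} + adap (c i) (contract f (X ∪ {i}))) := by
          rw [sum_sum_mul_mul_left hμ_sum]
          simp only [adap, contract_contract]
      _ ≤ ∑ i, ∑ r, μ i * μ r * ((contract f X {r} + alg (c i) (contract f (X ∪ {r}))) +
            (contract f Y {i} + alg (c i) (contract f (Y ∪ {r})))) :=
          sum_le_sum fun i _ => sum_le_sum fun r _ =>
            mul_le_mul_of_nonneg_left (hcoupled i r) (mul_nonneg (hμ_nonneg i) (hμ_nonneg r))
      _ = alg (.node μ c) (contract f X) + alg (.node μ c) (contract f Y) := by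
          simp only [alg, contract_contract, mul_add, sum_add_distrib,
            sum_sum_mul_mul_left hμ_sum fun i => contract f Y {i},
            sum_sum_mul_mul_right hμ_sum fun r => contract f Y {r}]

end Contraction

/-- Upper bound of Theorem 3.1: for any monotone submodular `f` with `f ∅ = 0`
and any decision tree, `adap(𝒯, f) ≤ 2 · alg(𝒯, f)`. -/
theorem submodular_adaptivity_gap_le_two {T : Type*} [Fintype T] [DecidableEq T]
    (𝒯 : DTree T) (h𝒯 : 𝒯.valid) (f : Finset T → ℝ)
    (hmono : ∀ A B : Finset T, A ⊆ B → f A ≤ f B)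
    (hsubmod : ∀ A B : Finset T, f (A ∪ B) + f (A ∩ B) ≤ f A + f B)
    (hempty : f ∅ = 0) :
    adap 𝒯 f ≤ 2 * alg 𝒯 f := by
  have hcontract : contract f ∅ = f := funext fun A => by simp [contract_apply, hempty]
  have h := adap_contract_le_alg_add_alg hsubmod (fun A B => hmono A B) 𝒯 h𝒯 (subset_refl ∅)
  rw [hcontract] at h
  linarith
end

section
/- Let T be a finite type, let k be a positive natural number, and let F be a downward-closed k-extendible system of finsets of T with unweighted rank function f. Let A ⊆ B be finsets of T and let G ⊆ B be a member of F that is maximal among subsets of B (i.e., G ∈ F, G ⊆ B, and G ∪ {e} ∉ F for every e ∈ B \ G). Then f(A) ≤ k · |G|; equivalently, every S ⊆ A with S ∈ F satisfies |S| ≤ k · |G|. (Lemma 4.2: any greedily constructed maximal independent subset of B is a k-approximation to the largest independent subset of any A ⊆ B.) -/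
/-- Downward-closed family of finsets: contains `∅` and all subsets of members. -/
def DownwardClosed {T : Type*} (F : Finset (Finset T)) : Prop :=
  ∅ ∈ F ∧ ∀ B ∈ F, ∀ A ⊆ B, A ∈ F

/-- `k`-extendible system. -/
def KExtendible {T : Type*} [DecidableEq T] (k : ℕ) (F : Finset (Finset T)) : Prop :=
  ∀ A B : Finset T, A ⊆ B → B ∈ F → ∀ e : T, A ∪ {e} ∈ F →
    ∃ Z ⊆ B \ A, Z.card ≤ k ∧ (B \ Z) ∪ {e} ∈ F

/-- Unweighted rank function `f(A) = max_{B ∈ F} |A ∩ B|` (as a natural number). -/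
def urankNat {T : Type*} [DecidableEq T] (F : Finset (Finset T)) (A : Finset T) : ℕ :=
  F.sup fun B => (A ∩ B).card

/-!
Starting from an independent `S ⊆ B`, add the elements of `G \ S` one at a time. By
`k`-extendibility each addition keeps the set independent at the cost of removing at most `k`
elements, none of them in `G`. The result is independent, contains `G` and lies in `B`, so by
maximality it is `G`; hence `|S \ G| ≤ k |G \ S|` and `|S| ≤ k |G|`.
-/

theorem DownwardClosed.mem_of_subset {T : Type*} {F : Finset (Finset T)} (hF : DownwardClosed F)
    {A B : Finset T} (hB : B ∈ F) (hAB : A ⊆ B) : A ∈ F :=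
  hF.2 B hB A hAB

section

open Finset

variable {T : Type*} [DecidableEq T] {k : ℕ} {F : Finset (Finset T)}

theorem KExtendible.exists_extend (hext : KExtendible k F) {I C : Finset T} (hIC : I ⊆ C)
    (hC : C ∈ F) {e : T} (he : I ∪ {e} ∈ F) :
    ∃ C' ∈ F, I ∪ {e} ⊆ C' ∧ C' ⊆ C ∪ {e} ∧ (C \ C').card ≤ k := by
  obtain ⟨Z, hZ, hZk, hZF⟩ := hext I C hIC hC e he
  have hIZ : I ⊆ C \ Z := fun x hx =>
    mem_sdiff.2 ⟨hIC hx, fun hxZ => (mem_sdiff.1 (hZ hxZ)).2 hx⟩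
  refine ⟨C \ Z ∪ {e}, hZF, union_subset_union hIZ subset_rfl,
    union_subset_union sdiff_subset subset_rfl, (card_le_card ?_).trans hZk⟩
  intro x hx
  obtain ⟨hxC, hxC'⟩ := mem_sdiff.1 hx
  by_contra hxZ
  exact hxC' (mem_union_left _ (mem_sdiff.2 ⟨hxC, hxZ⟩))

theorem KExtendible.exists_extend_of_subset (hext : KExtendible k F) (hF : DownwardClosed F)
    {C D : Finset T} (hC : C ∈ F) (hD : D ∈ F) {P : Finset T} (hPD : P ⊆ D) :
    ∃ C' ∈ F, C ∩ D ∪ P ⊆ C' ∧ C' ⊆ C ∪ P ∧ (C \ C').card ≤ k * P.card := by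
  induction P using Finset.induction_on with
  | empty => exact ⟨C, hC, by simp, by simp, by simp⟩
  | @insert g P hgP ih =>
    obtain ⟨C₁, hC₁, hIC₁, hC₁C, hcard₁⟩ := ih ((subset_insert g P).trans hPD)
    have hID : C ∩ D ∪ P ∪ {g} ⊆ D :=
      union_subset (union_subset inter_subset_right ((subset_insert g P).trans hPD))
        (singleton_subset_iff.2 (hPD (mem_insert_self g P)))
    obtain ⟨C₂, hC₂, hIC₂, hC₂C₁, hcard₂⟩ :=
      hext.exists_extend hIC₁ hC₁ (hF.mem_of_subset hD hID)
    refine ⟨C₂, hC₂, ?_, ?_, ?_⟩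
    · rw [union_insert, ← union_singleton]
      exact hIC₂
    · rw [union_insert, ← union_singleton]
      exact hC₂C₁.trans (union_subset_union hC₁C subset_rfl)
    · calc (C \ C₂).card ≤ (C \ C₁ ∪ C₁ \ C₂).card := card_le_card (sdiff_triangle C C₁ C₂)
        _ ≤ (C \ C₁).card + (C₁ \ C₂).card := card_union_le _ _
        _ ≤ k * P.card + k := Nat.add_le_add hcard₁ hcard₂
        _ = k * (insert g P).card := by rw [card_insert_of_notMem hgP, Nat.mul_succ]

theorem KExtendible.exists_superset (hext : KExtendible k F) (hF : DownwardClosed F)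
    {C D : Finset T} (hC : C ∈ F) (hD : D ∈ F) :
    ∃ C' ∈ F, D ⊆ C' ∧ C' ⊆ C ∪ D ∧ (C \ C').card ≤ k * (D \ C).card := by
  obtain ⟨C', hC', hDC', hC'C, hcard⟩ := hext.exists_extend_of_subset hF hC hD sdiff_subset
  refine ⟨C', hC', fun x hx => hDC' ?_, hC'C.trans (union_subset_union subset_rfl sdiff_subset),
    hcard⟩
  by_cases hxC : x ∈ C
  · exact mem_union_left _ (mem_inter.2 ⟨hxC, hx⟩)
  · exact mem_union_right _ (mem_sdiff.2 ⟨hx, hxC⟩)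

theorem eq_of_maximal_of_subset (hF : DownwardClosed F) {B G C : Finset T}
    (hmax : ∀ e ∈ B \ G, G ∪ {e} ∉ F) (hC : C ∈ F) (hGC : G ⊆ C) (hCB : C ⊆ B) : C = G := by
  refine (Subset.antisymm hGC fun x hxC => ?_).symm
  by_contra hxG
  exact hmax x (mem_sdiff.2 ⟨hCB hxC, hxG⟩)
    (hF.mem_of_subset hC (union_subset hGC (singleton_subset_iff.2 hxC)))

theorem card_le_mul_card_of_maximal (hk : 0 < k) (hF : DownwardClosed F)
    (hext : KExtendible k F) {B G S : Finset T} (hG : G ∈ F) (hGB : G ⊆ B)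
    (hmax : ∀ e ∈ B \ G, G ∪ {e} ∉ F) (hS : S ∈ F) (hSB : S ⊆ B) :
    S.card ≤ k * G.card := by
  obtain ⟨C, hC, hGC, hCSG, hcard⟩ := hext.exists_superset hF hS hG
  obtain rfl : C = G := eq_of_maximal_of_subset hF hmax hC hGC (hCSG.trans (union_subset hSB hGB))
  calc S.card = (S \ C).card + (S ∩ C).card := (card_sdiff_add_card_inter S C).symm
    _ ≤ k * (C \ S).card + k * (C ∩ S).card := by
      rw [inter_comm]
      exact Nat.add_le_add hcard (Nat.le_mul_of_pos_left _ hk)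
    _ = k * C.card := by rw [← Nat.mul_add, card_sdiff_add_card_inter]

theorem urankNat_le (hF : DownwardClosed F) {A : Finset T} {m : ℕ}
    (h : ∀ S ⊆ A, S ∈ F → S.card ≤ m) : urankNat F A ≤ m :=
  Finset.sup_le fun W hW => h (A ∩ W) inter_subset_left (hF.mem_of_subset hW inter_subset_right)

end

theorem greedy_k_approximation_general {T : Type*} [DecidableEq T]
    (k : ℕ) (hk : 0 < k) (F : Finset (Finset T))
    (hdc : DownwardClosed F) (hext : KExtendible k F)
    (A B G : Finset T) (hAB : A ⊆ B)
    (hG : G ∈ F) (hGB : G ⊆ B)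
    (hmax : ∀ e ∈ B \ G, G ∪ {e} ∉ F) :
    urankNat F A ≤ k * G.card ∧ ∀ S ⊆ A, S ∈ F → S.card ≤ k * G.card := by
  have hbound : ∀ S ⊆ A, S ∈ F → S.card ≤ k * G.card := fun S hSA hS =>
    card_le_mul_card_of_maximal hk hdc hext hG hGB hmax hS (hSA.trans hAB)
  exact ⟨urankNat_le hdc hbound, hbound⟩

/-- Lemma 4.2: if `G ∈ F` is a maximal independent subset of `B` and `A ⊆ B`,
then `f(A) ≤ k · |G|`; equivalently, every independent `S ⊆ A` has `|S| ≤ k · |G|`. -/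
theorem greedy_k_approximation {T : Type*} [Fintype T] [DecidableEq T]
    (k : ℕ) (hk : 0 < k) (F : Finset (Finset T))
    (hdc : DownwardClosed F) (hext : KExtendible k F)
    (A B G : Finset T) (hAB : A ⊆ B)
    (hG : G ∈ F) (hGB : G ⊆ B)
    (hmax : ∀ e ∈ B \ G, G ∪ {e} ∉ F) :
    urankNat F A ≤ k * G.card ∧ ∀ S ⊆ A, S ∈ F → S.card ≤ k * G.card :=
  greedy_k_approximation_general k hk F hdc hext A B G hAB hG hGB hmax
end

section
/- Let T be a finite type, let k be a natural number, and let F be a downward-closed k-extendible system of finsets of T. Then for every A ⊆ B with B ∈ F and every finset E ⊆ T with A ∪ E ∈ F, there exists a set Z ⊆ B \ A such that |Z| ≤ k · |E| and (B \ Z) ∪ E ∈ F. (Fact A.1: the k-extendible exchange property extends from single elements to sets.) -/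
/-!
Induct on `E`. To add a new element `e`, first apply the single-element exchange to `A ⊆ B`,
removing a set `Z₀` of at most `k` elements and obtaining `B' = (B \ Z₀) ∪ {e}`; then apply the
induction hypothesis to `A ∪ {e} ⊆ B'` and the remaining elements. The removed set `Z₁` avoids
`A ∪ {e}`, so `Z₀ ∪ Z₁` lies in `B \ A` and has at most `k + k · |E|` elements.
-/

namespace Finset

variable {α : Type*} [DecidableEq α]

theorem subset_sdiff_of_subset_union_singleton_sdiff {A B Z₀ Z₁ : Finset α} {e : α}
    (h : Z₁ ⊆ (B \ Z₀ ∪ {e}) \ (A ∪ {e})) : Z₁ ⊆ B \ A := by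
  intro x hx
  have := h hx
  simp only [mem_sdiff, mem_union, mem_singleton] at this ⊢
  tauto

theorem sdiff_union_singleton_sdiff_union {B Z₀ Z₁ E : Finset α} {e : α} (he : e ∉ Z₁) :
    (B \ Z₀ ∪ {e}) \ Z₁ ∪ E = B \ (Z₀ ∪ Z₁) ∪ insert e E := by
  ext x
  simp only [mem_union, mem_sdiff, mem_singleton, mem_insert]
  by_cases hx : x = e
  · subst hx; tauto
  · tauto

end Finset

open Finset

theorem kExtendible_property_for_sets_general {T : Type*} [DecidableEq T]
    (k : ℕ) (F : Finset (Finset T))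
    (hdc : DownwardClosed F) (hext : KExtendible k F)
    (A B E : Finset T) (hAB : A ⊆ B) (hB : B ∈ F) (hAE : A ∪ E ∈ F) :
    ∃ Z ⊆ B \ A, Z.card ≤ k * E.card ∧ (B \ Z) ∪ E ∈ F := by
  induction E using Finset.induction generalizing A B with
  | empty => exact ⟨∅, empty_subset _, by simp, by simpa using hB⟩
  | @insert e E he ih =>
    rw [insert_eq, ← union_assoc] at hAE
    have hAe : A ∪ {e} ∈ F := hdc.2 _ hAE _ subset_union_left
    obtain ⟨Z₀, hZ₀, hZ₀k, hB'⟩ := hext A B hAB hB e hAe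
    have hAB' : A ∪ {e} ⊆ B \ Z₀ ∪ {e} :=
      union_subset_union (subset_sdiff.2 ⟨hAB, disjoint_of_subset_right hZ₀ disjoint_sdiff⟩)
        subset_rfl
    obtain ⟨Z₁, hZ₁, hZ₁k, hmem⟩ := ih (A ∪ {e}) _ hAB' hB' hAE
    have heZ₁ : e ∉ Z₁ := fun h ↦ (mem_sdiff.1 (hZ₁ h)).2 (mem_union_right _ (mem_singleton_self e))
    refine ⟨Z₀ ∪ Z₁, union_subset hZ₀ (subset_sdiff_of_subset_union_singleton_sdiff hZ₁), ?_, ?_⟩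
    · calc (Z₀ ∪ Z₁).card ≤ Z₀.card + Z₁.card := card_union_le _ _
        _ ≤ k + k * E.card := Nat.add_le_add hZ₀k hZ₁k
        _ = k * (insert e E).card := by rw [card_insert_of_notMem he]; ring
    · rwa [← sdiff_union_singleton_sdiff_union heZ₁]

/-- Fact A.1: the `k`-extendible exchange property extends from single
elements to sets: if `A ⊆ B ∈ F` and `A ∪ E ∈ F`, then some `Z ⊆ B \ A` with
`|Z| ≤ k · |E|` has `(B \ Z) ∪ E ∈ F`. -/
theorem kExtendible_property_for_sets {T : Type*} [Fintype T] [DecidableEq T]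
    (k : ℕ) (F : Finset (Finset T))
    (hdc : DownwardClosed F) (hext : KExtendible k F)
    (A B E : Finset T) (hAB : A ⊆ B) (hB : B ∈ F) (hAE : A ∪ E ∈ F) :
    ∃ Z ⊆ B \ A, Z.card ≤ k * E.card ∧ (B \ Z) ∪ E ∈ F :=
  kExtendible_property_for_sets_general k F hdc hext A B E hAB hB hAE
end

section
/- Let T be a finite type, let F be a downward-closed family of finsets of T, let w : T → ℝ be strictly positive weights, and let f be the weighted rank function of F with weights w. For each integer j let f_j be the unweighted class rank function f_j(A) := max_{B ∈ F} |{t ∈ A ∩ B : 2^{j−1} < w(t) ≤ 2^j}|. Then for every finset A of T, f(A) ≤ Σ_j 2^j · f_j(A), where the sum ranges over the finitely many integers j for which some t ∈ T satisfies 2^{j−1} < w(t) ≤ 2^j. (The class-decomposition inequality used to reduce weighted to unweighted rank functions.) -/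
/-- Weighted rank function `f(A) = max_{B ∈ F} Σ_{t ∈ A ∩ B} w(t)`
(for a nonempty family; any downward-closed family is nonempty). -/
noncomputable def wrank {T : Type*} [DecidableEq T] (F : Finset (Finset T))
    (w : T → ℝ) (A : Finset T) : ℝ :=
  if h : F.Nonempty then F.sup' h (fun B => ∑ t ∈ A ∩ B, w t) else 0

open Classical in
/-- Unweighted class rank function
`f_j(A) = max_{B ∈ F} |{t ∈ A ∩ B : 2^{j−1} < w(t) ≤ 2^j}|` (as a real number). -/
noncomputable def classRank {T : Type*} [DecidableEq T] (F : Finset (Finset T))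
    (w : T → ℝ) (j : ℤ) (A : Finset T) : ℝ :=
  ((F.sup fun B =>
      ((A ∩ B).filter fun t => (2:ℝ)^(j-1) < w t ∧ w t ≤ (2:ℝ)^j).card : ℕ) : ℝ)

/-! Every positive weight lies in exactly one dyadic class `(2^(j-1), 2^j]`, namely the one with
`j = ⌈log₂ w⌉` (`Int.clog 2 w`). For a fixed `B ∈ F`, split `Σ_{t ∈ A ∩ B} w t` by class and bound
each weight by the top `2^j` of its class: the `j`-th part is at most `2^j` times the number of
class-`j` elements of `A ∩ B`, which is at most `f_j(A)`. -/

theorem Int.zpow_sub_one_lt_and_le_zpow_iff_clog_eq {R : Type*} [Semifield R] [LinearOrder R]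
    [IsStrictOrderedRing R] [FloorSemiring R] {b : ℕ} (hb : 1 < b) {r : R} (hr : 0 < r) {j : ℤ} :
    (b : R) ^ (j - 1) < r ∧ r ≤ (b : R) ^ j ↔ Int.clog b r = j := by
  rw [Int.zpow_lt_iff_lt_clog hb hr, Int.le_zpow_iff_clog_le hb hr]
  omega

section WeightedRank

variable {T : Type*} [DecidableEq T] (F : Finset (Finset T)) (w : T → ℝ) (A : Finset T)

theorem wrank_le {c : ℝ} (hc : 0 ≤ c) (h : ∀ B ∈ F, ∑ t ∈ A ∩ B, w t ≤ c) : wrank F w A ≤ c := by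
  unfold wrank
  split_ifs with hF
  · exact Finset.sup'_le hF _ h
  · exact hc

theorem classRank_nonneg (j : ℤ) : 0 ≤ classRank F w j A :=
  Nat.cast_nonneg _

theorem card_filter_le_classRank {B : Finset T} (hB : B ∈ F) (j : ℤ) :
    (((A ∩ B).filter fun t => (2:ℝ) ^ (j - 1) < w t ∧ w t ≤ (2:ℝ) ^ j).card : ℝ)
      ≤ classRank F w j A := by
  unfold classRank
  exact_mod_cast Finset.le_sup (f := fun B =>
    ((A ∩ B).filter fun t => (2:ℝ) ^ (j - 1) < w t ∧ w t ≤ (2:ℝ) ^ j).card) hB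

theorem sum_filter_le_zpow_mul_classRank {B : Finset T} (hB : B ∈ F) (j : ℤ) :
    ∑ t ∈ (A ∩ B).filter (fun t => (2:ℝ) ^ (j - 1) < w t ∧ w t ≤ (2:ℝ) ^ j), w t
      ≤ (2:ℝ) ^ j * classRank F w j A :=
  calc _ ≤ ((A ∩ B).filter fun t => (2:ℝ) ^ (j - 1) < w t ∧ w t ≤ (2:ℝ) ^ j).card • (2:ℝ) ^ j :=
        Finset.sum_le_card_nsmul _ _ _ fun t ht => (Finset.mem_filter.mp ht).2.2
    _ ≤ (2:ℝ) ^ j * classRank F w j A := by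
        rw [nsmul_eq_mul, mul_comm]
        gcongr
        exact card_filter_le_classRank F w A hB j

end WeightedRank

theorem weighted_rank_le_sum_class_ranks_general {T : Type*} [DecidableEq T]
    (F : Finset (Finset T))
    (w : T → ℝ) (hw : ∀ t, 0 < w t)
    (J : Finset ℤ)
    (hJ : ∀ j : ℤ, j ∈ J ↔ ∃ t : T, (2:ℝ)^(j-1) < w t ∧ w t ≤ (2:ℝ)^j)
    (A : Finset T) :
    wrank F w A ≤ ∑ j ∈ J, (2:ℝ)^j * classRank F w j A := by
  have hclass (t : T) (j : ℤ) : (2:ℝ) ^ (j - 1) < w t ∧ w t ≤ (2:ℝ) ^ j ↔ Int.clog 2 (w t) = j :=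
    mod_cast Int.zpow_sub_one_lt_and_le_zpow_iff_clog_eq one_lt_two (hw t)
  have hmaps (t : T) : Int.clog 2 (w t) ∈ J := (hJ _).2 ⟨t, (hclass t _).2 rfl⟩
  refine wrank_le F w A
    (Finset.sum_nonneg fun j _ => mul_nonneg (by positivity) (classRank_nonneg F w A j))
    fun B hB => ?_
  calc ∑ t ∈ A ∩ B, w t
      = ∑ j ∈ J, ∑ t ∈ (A ∩ B).filter (fun t => Int.clog 2 (w t) = j), w t :=
        (Finset.sum_fiberwise_of_maps_to (fun t _ => hmaps t) _).symm
    _ ≤ ∑ j ∈ J, (2:ℝ) ^ j * classRank F w j A := by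
        refine Finset.sum_le_sum fun j _ => ?_
        simp only [← hclass]
        exact sum_filter_le_zpow_mul_classRank F w A hB j

/-- The class-decomposition inequality: the weighted rank is at most the sum of
`2^j` times the unweighted class ranks, over the occupied weight classes. -/
theorem weighted_rank_le_sum_class_ranks {T : Type*} [Fintype T] [DecidableEq T]
    (F : Finset (Finset T)) (hdc : DownwardClosed F)
    (w : T → ℝ) (hw : ∀ t, 0 < w t)
    (J : Finset ℤ)
    (hJ : ∀ j : ℤ, j ∈ J ↔ ∃ t : T, (2:ℝ)^(j-1) < w t ∧ w t ≤ (2:ℝ)^j)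
    (A : Finset T) :
    wrank F w A ≤ ∑ j ∈ J, (2:ℝ)^j * classRank F w j A :=
  weighted_rank_le_sum_class_ranks_general F w hw J hJ A
end

section
/- Let k ≥ 2 be a natural number, let n be a natural number, and let w, a, a' : ℕ → ℝ satisfy, for all i < n: w(i) ≥ 0, a(i) ≥ 0, a'(i) ≥ 0, a'(i) ≥ a(i) − k · Σ_{i' < i} a'(i'), and w(i+1) ≤ w(i) / k² whenever i + 1 < n. Then Σ_{i < n} w(i) · a'(i) ≥ (1/2) · Σ_{i < n} w(i) · a(i). (The arithmetic core of Claim 4.5: a greedy-optimal selection over geometrically separated weight classes loses at most a factor of 2.) -/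
/-!
Bound each `a i` by `a' i + k · Σ_{j < i} a' j` and exchange the order of summation: the loss
`k · Σ_i w i · Σ_{j < i} a' j` becomes `Σ_j a' j · (k · Σ_{i > j} w i)`. Since the weights decay
by a factor `k² ≥ k + 1`, the tail `k · Σ_{i > j} w i` is at most `w j`, so the loss is at most
`Σ_j w j · a' j` and `Σ w a ≤ 2 · Σ w a'`.
-/

open Finset

lemma mul_sum_Ico_le_of_le_div_sq {k : ℝ} (hk₀ : 0 < k) (hk : k + 1 ≤ k ^ 2) {n : ℕ}
    {w : ℕ → ℝ} (hw : ∀ i < n, 0 ≤ w i) (hsep : ∀ i, i + 1 < n → w (i + 1) ≤ w i / k ^ 2)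
    {i : ℕ} (hi : i < n) : k * ∑ j ∈ Ico (i + 1) n, w j ≤ w i := by
  obtain ⟨d, hd⟩ := Nat.exists_eq_add_of_lt hi
  induction d generalizing i with
  | zero => simpa [hd] using hw i hi
  | succ d ih =>
    have hnext : i + 1 < n := by omega
    have htail := ih (i := i + 1) (by omega) (by omega)
    have hdecay : w (i + 1) * k ^ 2 ≤ w i := (le_div_iff₀ (by positivity)).mp (hsep i hnext)
    calc k * ∑ j ∈ Ico (i + 1) n, w j
        = k * w (i + 1) + k * ∑ j ∈ Ico (i + 1 + 1) n, w j := by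
          rw [sum_eq_sum_Ico_succ_bot hnext, mul_add]
      _ ≤ (k + 1) * w (i + 1) := by linarith
      _ ≤ k ^ 2 * w (i + 1) := mul_le_mul_of_nonneg_right hk (hw _ hnext)
      _ ≤ w i := by linarith

lemma sum_mul_sum_range_eq (n : ℕ) (f g : ℕ → ℝ) :
    ∑ i ∈ range n, f i * ∑ j ∈ range i, g j = ∑ j ∈ range n, g j * ∑ i ∈ Ico (j + 1) n, f i := by
  simp only [mul_sum, ← Nat.Ico_zero_eq_range]
  rw [sum_Ico_Ico_comm']
  exact sum_congr rfl fun _ _ => sum_congr rfl fun _ _ => mul_comm _ _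

theorem greedy_optimal_arith_general (k n : ℕ) (hk : 2 ≤ k) (w a a' : ℕ → ℝ)
    (hw : ∀ i < n, 0 ≤ w i)
    (ha' : ∀ i < n, 0 ≤ a' i)
    (hgreedy : ∀ i < n, a' i ≥ a i - (k : ℝ) * ∑ i' ∈ Finset.range i, a' i')
    (hsep : ∀ i, i + 1 < n → w (i + 1) ≤ w i / (k : ℝ)^2) :
    ∑ i ∈ Finset.range n, w i * a' i ≥ (1/2) * ∑ i ∈ Finset.range n, w i * a i := by
  have hk' : (2 : ℝ) ≤ k := by exact_mod_cast hk
  have hloss : ∑ i ∈ range n, w i * a i ≤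
      ∑ i ∈ range n, w i * a' i + k * ∑ i ∈ range n, w i * ∑ j ∈ range i, a' j := by
    rw [mul_sum, ← sum_add_distrib]
    refine sum_le_sum fun i hi => ?_
    have hi := mem_range.mp hi
    calc w i * a i ≤ w i * (a' i + k * ∑ j ∈ range i, a' j) :=
          mul_le_mul_of_nonneg_left (sub_le_iff_le_add.mp (hgreedy i hi)) (hw i hi)
      _ = w i * a' i + k * (w i * ∑ j ∈ range i, a' j) := by ring
  have htail : k * ∑ i ∈ range n, w i * ∑ j ∈ range i, a' j ≤ ∑ j ∈ range n, w j * a' j := by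
    rw [sum_mul_sum_range_eq, mul_sum]
    refine sum_le_sum fun j hj => ?_
    have hj := mem_range.mp hj
    calc k * (a' j * ∑ i ∈ Ico (j + 1) n, w i) = a' j * (k * ∑ i ∈ Ico (j + 1) n, w i) := by ring
      _ ≤ a' j * w j := mul_le_mul_of_nonneg_left
          (mul_sum_Ico_le_of_le_div_sq (by linarith) (by nlinarith) hw hsep hj) (ha' j hj)
      _ = w j * a' j := mul_comm _ _
  linarith

/-- The arithmetic core of Claim 4.5: if each `a'(i)` loses at most
`k · Σ_{i' < i} a'(i')` compared to `a(i)`, and consecutive weights are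
separated by a factor `k²`, then the greedy-optimal selection loses at most a
factor of `2`. -/
theorem greedy_optimal_arith (k n : ℕ) (hk : 2 ≤ k) (w a a' : ℕ → ℝ)
    (hw : ∀ i < n, 0 ≤ w i)
    (ha : ∀ i < n, 0 ≤ a i)
    (ha' : ∀ i < n, 0 ≤ a' i)
    (hgreedy : ∀ i < n, a' i ≥ a i - (k : ℝ) * ∑ i' ∈ Finset.range i, a' i')
    (hsep : ∀ i, i + 1 < n → w (i + 1) ≤ w i / (k : ℝ)^2) :
    ∑ i ∈ Finset.range n, w i * a' i ≥ (1/2) * ∑ i ∈ Finset.range n, w i * a i :=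
  greedy_optimal_arith_general k n hk w a a' hw ha' hgreedy hsep
end

section
/- Let p be a prime number, let d_u, d_v be natural numbers with 1 ≤ d_u ≤ p and 1 ≤ d_v ≤ p, and let L_u, L_v : ℕ → ZMod p. Then the following are equivalent: (i) there exist a natural number i with 1 ≤ i ≤ min(d_u, d_v) and j ∈ ZMod p such that L_u(i)·j + d_u = L_v(i)·j + d_v in ZMod p; (ii) d_u = d_v, or there exists a natural number i with 1 ≤ i ≤ min(d_u, d_v) such that L_u(i) ≠ L_v(i). (The characterization in Section 4.3 showing that two tree edges conflict in some partition matroid M_{i,j} exactly when neither endpoint node is an ancestor of the other.) -/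
/-! In the field `ZMod p` the equation `a * j + c = b * j + d` is solvable in `j` exactly when
`a ≠ b` or `c = d`, and depths in `[1, p]` are pairwise distinct modulo `p`. -/

theorem ZMod.natCast_injOn_Icc_one (n : ℕ) : Set.InjOn (Nat.cast : ℕ → ZMod n) (Set.Icc 1 n) := by
  rintro a ⟨ha1, han⟩ b ⟨hb1, hbn⟩ hab
  refine ((ZMod.natCast_eq_natCast_iff a b n).mp hab).eq_of_abs_lt ?_
  rw [abs_lt]
  omega

theorem exists_mul_add_eq_mul_add_iff {K : Type*} [Field K] (a b c d : K) :
    (∃ x, a * x + c = b * x + d) ↔ a ≠ b ∨ c = d := by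
  constructor
  · rintro ⟨x, hx⟩
    by_cases hab : a = b
    · exact .inr (add_left_cancel (hab ▸ hx))
    · exact .inl hab
  · rintro (hab | rfl)
    · refine ⟨(d - c) / (a - b), ?_⟩
      have : a - b ≠ 0 := sub_ne_zero.mpr hab
      field_simp
      ring
    · exact ⟨0, by simp⟩

/-- Characterization of conflicts in the partition matroids `M_{i,j}` of
Section 4.3: two edges at depths `d_u, d_v` with label lists `L_u, L_v`
conflict in some matroid iff `d_u = d_v` or the label lists differ at some
coordinate `i ≤ min(d_u, d_v)`. -/
theorem tree_edges_conflict_iff (p : ℕ) (hp : p.Prime)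
    (du dv : ℕ) (hdu1 : 1 ≤ du) (hdup : du ≤ p) (hdv1 : 1 ≤ dv) (hdvp : dv ≤ p)
    (Lu Lv : ℕ → ZMod p) :
    (∃ i : ℕ, 1 ≤ i ∧ i ≤ min du dv ∧ ∃ j : ZMod p,
        Lu i * j + (du : ZMod p) = Lv i * j + (dv : ZMod p)) ↔
    (du = dv ∨ ∃ i : ℕ, 1 ≤ i ∧ i ≤ min du dv ∧ Lu i ≠ Lv i) := by
  have := Fact.mk hp
  have hcast : (du : ZMod p) = dv ↔ du = dv :=
    (ZMod.natCast_injOn_Icc_one p).eq_iff ⟨hdu1, hdup⟩ ⟨hdv1, hdvp⟩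
  simp only [exists_mul_add_eq_mul_add_iff, hcast]
  constructor
  · rintro ⟨i, hi1, hi, hne | heq⟩
    · exact .inr ⟨i, hi1, hi, hne⟩
    · exact .inl heq
  · rintro (heq | ⟨i, hi1, hi, hne⟩)
    · exact ⟨1, le_rfl, le_min hdu1 hdv1, .inr heq⟩
    · exact ⟨i, hi1, hi, .inl hne⟩
end

section
/- Let ε be a real number with 0 < ε < 1, let D be a natural number, and let g : ℕ → ℝ satisfy: g(m) = 0 for all m > D; g(D) = ε·(1−ε)^D; and for every k < D, g(k) = max_{0 ≤ i ≤ D−k} [ (1−ε)^k·(1 − (1−ε)^{i+1}) + g(k+i+1) ]. Then g(k) < (1−ε)^k for every k ≤ D; in particular g(0) < 1. (Appendix A: the optimal non-adaptive value in the finite lower-bound example is less than 1.) -/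
/-!
Write `r = 1 - ε`. Since `r ^ k * (1 - r ^ (i + 1)) + r ^ (k + i + 1) = r ^ k`, every candidate in
the maximum defining `g k` is below `r ^ k` as soon as `g (k + i + 1) < r ^ (k + i + 1)`. So the
bound propagates from `k = D + 1` (where `g = 0 < r ^ (D + 1)`) and `k = D`
(where `g D = ε r ^ D`) down to every `k ≤ D`.
-/

open Finset

lemma pow_mul_one_sub_pow_add_lt {r x : ℝ} (k i : ℕ) (hx : x < r ^ (k + i + 1)) :
    r ^ k * (1 - r ^ (i + 1)) + x < r ^ k := by
  have hsplit : r ^ (k + i + 1) = r ^ k * r ^ (i + 1) := by rw [add_assoc, pow_add]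
  linarith

theorem lt_pow_of_eq_sup'_range {r : ℝ} {D : ℕ} {g : ℕ → ℝ}
    (hlast : g (D + 1) < r ^ (D + 1)) (hD : g D < r ^ D)
    (hg : ∀ k < D, g k = (range (D - k + 1)).sup' nonempty_range_add_one
        (fun i => r ^ k * (1 - r ^ (i + 1)) + g (k + i + 1))) :
    ∀ k ≤ D + 1, g k < r ^ k := by
  intro k
  induction h : D + 1 - k using Nat.strong_induction_on generalizing k with
  | _ n ih =>
    intro hk
    rcases lt_trichotomy k D with hlt | rfl | hgt
    · rw [hg k hlt, sup'_lt_iff]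
      intro i hi
      have hi : i < D - k + 1 := mem_range.1 hi
      exact pow_mul_one_sub_pow_add_lt k i (ih _ (by omega) (k + i + 1) rfl (by omega))
    · exact hD
    · obtain rfl : k = D + 1 := by omega
      exact hlast

/-- Appendix A: the optimal non-adaptive value in the finite lower-bound
example satisfies `g(k) < (1−ε)^k` for all `k ≤ D`; in particular `g(0) < 1`. -/
theorem nonadaptive_value_finite_example (ε : ℝ) (h1 : ε < 1)
    (D : ℕ) (g : ℕ → ℝ)
    (hg_zero : ∀ m, D < m → g m = 0)
    (hgD : g D = ε * (1 - ε)^D)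
    (hg : ∀ k < D, g k = (Finset.range (D - k + 1)).sup'
        (Finset.nonempty_range_iff.mpr (by omega))
        (fun i => (1 - ε)^k * (1 - (1 - ε)^(i+1)) + g (k + i + 1))) :
    ∀ k ≤ D, g k < (1 - ε)^k := by
  have hr : 0 < 1 - ε := sub_pos.2 h1
  intro k hk
  refine lt_pow_of_eq_sup'_range ?_ ?_ hg k (by omega)
  · rw [hg_zero _ D.lt_succ_self]
    positivity
  · rw [hgD]
    exact mul_lt_of_lt_one_left (pow_pos hr D) h1
end

section
/- There exists ε₀ with 0 < ε₀ < 1/2 such that for every real ε with 0 < ε < ε₀ the following holds. Let D be the least natural number with (1−ε)^D < ε², and let a : ℕ → ℝ satisfy: a(m) = 0 for all m > D, and for every k ≤ D, a(k) = Σ_{i=0}^{D−k} (1−ε)^i·ε·( (1−ε)^k + a(k+i+1) ). Then a(k) > ((4−6ε)/(2−ε))·(1−ε)^k − 8ε for every k ≤ D. (Appendix A: the adaptive strategy's value in the finite lower-bound example.) -/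
/-!
Subtracting `(1 - ε)` times the defining equation at `k + 1` from the one at `k` telescopes to
`a k = a (k + 1) + ε (2 - ε) (1 - ε)^k - ε (1 - ε)^(D + 1)`, so
`a k = (2 - ε) ((1 - ε)^k - (1 - ε)^(D + 1)) - ε (D + 1 - k) (1 - ε)^(D + 1)` exactly.
The loss against `(2 - ε) (1 - ε)^k` is `O(ε)`: `(1 - ε)^(D + 1) < ε²`, and minimality of `D`
gives `ε² ≤ (1 - ε)^(D - 1) ≤ exp (-ε (D - 1))`, whence `ε² D = O(1)`.
-/

open Finset

section AdaptiveValue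

variable {ε : ℝ} {D : ℕ} {a : ℕ → ℝ}

theorem adaptive_value_eq_succ (ha0 : ∀ m, D < m → a m = 0)
    (ha : ∀ k ≤ D, a k = ∑ i ∈ range (D - k + 1), (1 - ε)^i * ε * ((1 - ε)^k + a (k + i + 1)))
    {k : ℕ} (hk : k ≤ D) :
    a k = a (k + 1) + ε * (2 - ε) * (1 - ε)^k - ε * (1 - ε)^(D + 1) := by
  rcases hk.eq_or_lt with rfl | hk
  · rw [ha k le_rfl]
    simp only [Nat.sub_self, zero_add, range_one, sum_singleton, pow_zero, one_mul, add_zero]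
    rw [ha0 (k + 1) (Nat.lt_succ_self k)]
    ring
  set n := D - (k + 1) + 1
  have hn : D - k + 1 = n + 1 := by omega
  have hgeom : ε * ∑ i ∈ range n, (1 - ε)^i = 1 - (1 - ε)^n := by
    simpa using mul_neg_geom_sum (1 - ε) n
  have hshift : ∑ i ∈ range n, (1 - ε)^(i + 1) * ε * ((1 - ε)^k + a (k + (i + 1) + 1))
      = (1 - ε) * a (k + 1) + ε * (1 - ε)^(k + 1) * (ε * ∑ i ∈ range n, (1 - ε)^i) := by
    rw [ha (k + 1) hk, mul_sum, mul_sum, mul_sum, ← sum_add_distrib]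
    refine sum_congr rfl fun i _ => ?_
    rw [show k + (i + 1) + 1 = k + 1 + i + 1 by ring]
    ring
  rw [ha k hk.le, hn, sum_range_succ', hshift, hgeom,
    show D + 1 = k + 1 + n by omega]
  ring

theorem adaptive_value_eq (ha0 : ∀ m, D < m → a m = 0)
    (ha : ∀ k ≤ D, a k = ∑ i ∈ range (D - k + 1), (1 - ε)^i * ε * ((1 - ε)^k + a (k + i + 1)))
    {k : ℕ} (hk : k ≤ D + 1) :
    a k = (2 - ε) * ((1 - ε)^k - (1 - ε)^(D + 1)) - ε * ((D : ℝ) + 1 - k) * (1 - ε)^(D + 1) := by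
  induction hk using Nat.decreasingInduction with
  | self =>
    rw [ha0 (D + 1) (Nat.lt_succ_self D)]
    push_cast
    ring
  | of_succ k hk ih =>
    rw [adaptive_value_eq_succ ha0 ha (Nat.lt_succ_iff.mp hk), ih]
    push_cast
    ring

end AdaptiveValue

theorem sq_mul_le_two_of_sq_le_one_sub_pow {ε : ℝ} {m : ℕ} (hε0 : 0 ≤ ε) (hε1 : ε ≤ 1)
    (h : ε^2 ≤ (1 - ε)^m) : ε^2 * m ≤ 2 := by
  set x := ε * m / 2 with hx_def
  have hexp : ε^2 ≤ Real.exp (-x)^2 := by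
    calc ε^2 ≤ (1 - ε)^m := h
      _ ≤ Real.exp (-ε)^m := pow_le_pow_left₀ (by linarith) (Real.one_sub_le_exp_neg ε) m
      _ = Real.exp (-x)^2 := by rw [← Real.exp_nat_mul, ← Real.exp_nat_mul]; congr 1; rw [hx_def]; ring
  have hε : ε ≤ Real.exp (-x) := (pow_le_pow_iff_left₀ hε0 (Real.exp_pos _).le two_ne_zero).mp hexp
  have hinv : Real.exp (-x) * (x + 1) ≤ 1 := by
    calc Real.exp (-x) * (x + 1) ≤ Real.exp (-x) * Real.exp x :=
          mul_le_mul_of_nonneg_left (Real.add_one_le_exp x) (Real.exp_pos _).le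
      _ = 1 := by rw [← Real.exp_add, neg_add_cancel, Real.exp_zero]
  have hεx : ε * (x + 1) ≤ 1 :=
    (mul_le_mul_of_nonneg_right hε (by positivity)).trans hinv
  rw [hx_def] at hεx
  nlinarith

theorem sq_mul_succ_le_of_minimal {ε : ℝ} {D : ℕ} (hε0 : 0 ≤ ε) (hε1 : ε ≤ 1)
    (hD : ∀ D' : ℕ, D' < D → ¬((1 - ε)^D' < ε^2)) : ε^2 * ((D : ℝ) + 1) ≤ 2 + 2 * ε^2 := by
  rcases D with _ | D
  · push_cast
    nlinarith
  · have := sq_mul_le_two_of_sq_le_one_sub_pow hε0 hε1 (not_lt.mp (hD D (Nat.lt_succ_self D)))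
    push_cast
    linarith

/-- Appendix A: for all sufficiently small `ε`, the adaptive value in the
finite lower-bound example satisfies
`a(k) > ((4−6ε)/(2−ε))·(1−ε)^k − 8ε` for all `k ≤ D`. -/
theorem adaptive_value_finite_example :
    ∃ ε₀ : ℝ, 0 < ε₀ ∧ ε₀ < 1/2 ∧
      ∀ ε : ℝ, 0 < ε → ε < ε₀ →
      ∀ D : ℕ, ((1 - ε)^D < ε^2 ∧ ∀ D' : ℕ, D' < D → ¬((1 - ε)^D' < ε^2)) →
      ∀ a : ℕ → ℝ,
        (∀ m, D < m → a m = 0) →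
        (∀ k ≤ D, a k = ∑ i ∈ Finset.range (D - k + 1),
            (1 - ε)^i * ε * ((1 - ε)^k + a (k + i + 1))) →
      ∀ k ≤ D, a k > ((4 - 6*ε)/(2 - ε)) * (1 - ε)^k - 8*ε := by
  refine ⟨1/4, by norm_num, by norm_num, fun ε hε0 hε D ⟨hDlt, hDmin⟩ a ha0 ha k hk => ?_⟩
  have hq : 0 < 1 - ε := by linarith
  have hD := sq_mul_succ_le_of_minimal hε0.le (by linarith) hDmin
  have htail : (1 - ε)^(D + 1) ≤ ε^2 :=
    (pow_le_pow_of_le_one hq.le (by linarith) (Nat.le_succ D)).trans hDlt.le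
  have hkD : (k : ℝ) ≤ D := by exact_mod_cast hk
  have hloss : (2 - ε + ε * ((D : ℝ) + 1 - k)) * (1 - ε)^(D + 1) ≤ 8 * ε :=
    calc _ ≤ (2 + ε * ((D : ℝ) + 1)) * ε^2 :=
          mul_le_mul (by nlinarith) htail (pow_nonneg hq.le _) (by positivity)
      _ = 2 * ε^2 + ε * (ε^2 * ((D : ℝ) + 1)) := by ring
      _ ≤ 2 * ε^2 + ε * (2 + 2 * ε^2) := by gcongr
      _ ≤ 8 * ε := by nlinarith
  have hcoef : (4 - 6*ε)/(2 - ε) * (1 - ε)^k < (2 - ε) * (1 - ε)^k := by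
    refine mul_lt_mul_of_pos_right ?_ (pow_pos hq k)
    rw [div_lt_iff₀ (by linarith)]
    nlinarith
  rw [adaptive_value_eq ha0 ha (Nat.le_succ_of_le hk)]
  linarith
end
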